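/- Let k ≥ 1 and let K = {z ∈ (Fin k → ℝ) : zᵢ ≥ 0 for all i} \ {0}; for a set A ⊆ (Fin k → ℝ) write A − K = {a − z : a ∈ A, z ∈ K}. Then the set-dominance relation is irreflexive on nonempty compact sets: for every nonempty compact set A ⊆ (Fin k → ℝ), it is not the case that A ⊆ A − K. -/
import Mathlib


/-- The nonnegative orthant of `ℝ^k` with the origin removed. -/
def orthantK (k : ℕ) : Set (Fin k → ℝ) :=
  {z : Fin k → ℝ | ∀ i, 0 ≤ z i} \ {0}

/-- Minkowski difference `A − K` of a set `A ⊆ ℝ^k` with the punctured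
nonnegative orthant `K`. -/
def minusK (k : ℕ) (A : Set (Fin k → ℝ)) : Set (Fin k → ℝ) :=
  {x | ∃ a ∈ A, ∃ z ∈ orthantK k, x = a - z}

/-- Irreflexivity of the set-dominance relation on nonempty compact sets: no
nonempty compact set `A ⊆ ℝ^k` satisfies `A ⊆ A − K`. -/
theorem set_dominance_irreflexive (k : ℕ) (hk : 1 ≤ k)
    (A : Set (Fin k → ℝ)) (hne : A.Nonempty) (hcomp : IsCompact A) :
    ¬ A ⊆ minusK k A := by
  intro hsub
  have hcont : Continuous (fun x : Fin k → ℝ => ∑ i, x i) := by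
    continuity
  obtain ⟨a₀, ha₀A, hmax⟩ :=
    hcomp.exists_isMaxOn hne hcont.continuousOn
  obtain ⟨a, haA, z, hz, heq⟩ := hsub ha₀A
  obtain ⟨hznn, hzne⟩ := hz
  have hzpos : 0 < ∑ i, z i := by
    rcases Function.ne_iff.mp (by simpa using hzne) with ⟨j, hj⟩
    have hj' : 0 < z j := lt_of_le_of_ne (hznn j) (Ne.symm (by simpa using hj))
    exact Finset.sum_pos' (fun i _ => hznn i) ⟨j, Finset.mem_univ j, hj'⟩
  have h1 : ∑ i, a₀ i = ∑ i, a i - ∑ i, z i := by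
    rw [heq]; simp [Finset.sum_sub_distrib]
  have h2 : ∑ i, a i ≤ ∑ i, a₀ i := hmax haA
  linarith
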